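/- Let P be a π-reversible stochastic matrix. Then ρ(GPG) ≤ ρ(P); that is, sup over nonzero f ∈ ℓ²₀(π) of |⟨f, (GPG)f⟩_π|/⟨f,f⟩_π is at most sup over nonzero f ∈ ℓ²₀(π) of |⟨f, Pf⟩_π|/⟨f,f⟩_π. -/

import Mathlib

open Matrix Finset

/-- Total mass of the orbit (block) `i` under `π`. -/
noncomputable def orbMass {n k : ℕ} (π : Fin n → ℝ) (part : Fin n → Fin k) (i : Fin k) : ℝ :=
  ∑ z ∈ Finset.univ.filter (fun z => part z = i), π z

/-- The Gibbs orbit kernel. -/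
noncomputable def gibbsKer {n k : ℕ} (π : Fin n → ℝ) (part : Fin n → Fin k) :
    Matrix (Fin n) (Fin n) ℝ :=
  Matrix.of fun x y => if part y = part x then π y / orbMass π part (part x) else 0

/-- The `π`-weighted inner product. -/
noncomputable def innerPi {n : ℕ} (π : Fin n → ℝ) (f g : Fin n → ℝ) : ℝ :=
  ∑ x, π x * f x * g x

/-- The second-largest eigenvalue in modulus of a `π`-reversible stochastic matrix,
in Rayleigh-quotient form: the sup over nonzero `f ∈ ℓ²₀(π)` of
`|⟨f, Qf⟩_π| / ⟨f, f⟩_π`. -/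
noncomputable def rho {n : ℕ} (π : Fin n → ℝ) (Q : Matrix (Fin n) (Fin n) ℝ) : ℝ :=
  sSup {r : ℝ | ∃ f : Fin n → ℝ, f ≠ 0 ∧ (∑ x, π x * f x) = 0 ∧
    r = |innerPi π f (Q.mulVec f)| / innerPi π f f}

/-! `G` is the `π`-orthogonal projection onto the functions that are constant on orbits: it is
`π`-self-adjoint and idempotent, and since it fixes constants it maps `ℓ²₀(π)` into itself.
Hence `⟨f, GPGf⟩_π = ⟨Gf, P(Gf)⟩_π` with `⟨Gf, Gf⟩_π ≤ ⟨f, f⟩_π`, so every Rayleigh quotient of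
`GPG` is either `0` or dominated by a Rayleigh quotient of `P`. The quotients of `P` are bounded
by `1` (a reversible Markov operator is an `ℓ²(π)`-contraction), which is what makes `ρ(P)` a
genuine supremum rather than the junk value of `sSup` on an unbounded set. -/

def rayleighSet {n : ℕ} (π : Fin n → ℝ) (Q : Matrix (Fin n) (Fin n) ℝ) : Set ℝ :=
  {r : ℝ | ∃ f : Fin n → ℝ, f ≠ 0 ∧ (∑ x, π x * f x) = 0 ∧
    r = |innerPi π f (Q.mulVec f)| / innerPi π f f}

section InnerPi

variable {n : ℕ} {π : Fin n → ℝ}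

lemma innerPi_self_nonneg (hπ : ∀ x, 0 ≤ π x) (f : Fin n → ℝ) : 0 ≤ innerPi π f f :=
  sum_nonneg fun x _ => by rw [mul_assoc]; exact mul_nonneg (hπ x) (mul_self_nonneg _)

lemma innerPi_self_pos (hπ : ∀ x, 0 < π x) {f : Fin n → ℝ} (hf : f ≠ 0) :
    0 < innerPi π f f := by
  obtain ⟨x, hx⟩ := Function.ne_iff.mp hf
  refine sum_pos' (fun z _ => ?_) ⟨x, mem_univ x, ?_⟩
  · rw [mul_assoc]; exact mul_nonneg (hπ z).le (mul_self_nonneg _)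
  · rw [mul_assoc]; exact mul_pos (hπ x) (mul_self_pos.mpr hx)

lemma innerPi_sq_le (hπ : ∀ x, 0 ≤ π x) (f g : Fin n → ℝ) :
    innerPi π f g ^ 2 ≤ innerPi π f f * innerPi π g g :=
  sum_sq_le_sum_mul_sum_of_sq_le_mul _
    (fun x _ => by rw [mul_assoc]; exact mul_nonneg (hπ x) (mul_self_nonneg _))
    (fun x _ => by rw [mul_assoc]; exact mul_nonneg (hπ x) (mul_self_nonneg _))
    (fun x _ => le_of_eq (by ring))

variable {Q : Matrix (Fin n) (Fin n) ℝ}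

lemma innerPi_mulVec_comm (hrev : ∀ x y, π x * Q x y = π y * Q y x) (f h : Fin n → ℝ) :
    innerPi π f (Q *ᵥ h) = innerPi π (Q *ᵥ f) h := by
  simp only [innerPi, mulVec, dotProduct, mul_sum, sum_mul]
  rw [sum_comm]
  exact sum_congr rfl fun y _ => sum_congr rfl fun x _ => by
    linear_combination (f x * h y) * hrev x y

lemma sum_mul_mulVec (hrev : ∀ x y, π x * Q x y = π y * Q y x) (hrow : ∀ x, ∑ y, Q x y = 1)
    (h : Fin n → ℝ) : ∑ x, π x * (Q *ᵥ h) x = ∑ x, π x * h x := by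
  simp only [mulVec, dotProduct, mul_sum]
  rw [sum_comm]
  refine sum_congr rfl fun y _ => ?_
  calc ∑ x, π x * (Q x y * h y) = ∑ x, π y * Q y x * h y :=
        sum_congr rfl fun x _ => by rw [← mul_assoc, hrev]
    _ = π y * h y := by rw [← sum_mul, ← mul_sum, hrow, mul_one]

lemma abs_innerPi_mulVec_self_le (hπ : ∀ x, 0 ≤ π x) (hnonneg : ∀ x y, 0 ≤ Q x y)
    (hrow : ∀ x, ∑ y, Q x y = 1) (hrev : ∀ x y, π x * Q x y = π y * Q y x) (f : Fin n → ℝ) :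
    |innerPi π f (Q *ᵥ f)| ≤ innerPi π f f := by
  have hterm : ∀ x y, |π x * Q x y * (f x * f y)| ≤ π x * Q x y * ((f x ^ 2 + f y ^ 2) / 2) :=
    fun x y => by
      rw [abs_mul, abs_of_nonneg (mul_nonneg (hπ x) (hnonneg x y))]
      exact mul_le_mul_of_nonneg_left (abs_le.mpr ⟨by nlinarith [sq_nonneg (f x + f y)],
        by nlinarith [sq_nonneg (f x - f y)]⟩) (mul_nonneg (hπ x) (hnonneg x y))
  calc |innerPi π f (Q *ᵥ f)| = |∑ x, ∑ y, π x * Q x y * (f x * f y)| := by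
        simp only [innerPi, mulVec, dotProduct, mul_sum]
        congr 1
        exact sum_congr rfl fun x _ => sum_congr rfl fun y _ => by ring
    _ ≤ ∑ x, ∑ y, π x * Q x y * ((f x ^ 2 + f y ^ 2) / 2) :=
        (abs_sum_le_sum_abs _ _).trans <| sum_le_sum fun x _ =>
          (abs_sum_le_sum_abs _ _).trans <| sum_le_sum fun y _ => hterm x y
    _ = (∑ x, π x * f x ^ 2 * ∑ y, Q x y + ∑ x, π x * (Q *ᵥ fun y => f y ^ 2) x) / 2 := by
        simp only [mulVec, dotProduct, mul_sum, ← sum_add_distrib, sum_div]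
        exact sum_congr rfl fun x _ => sum_congr rfl fun y _ => by ring
    _ = innerPi π f f := by
        rw [sum_mul_mulVec hrev hrow]
        simp only [hrow, innerPi, mul_one, ← two_mul, mul_assoc, sq]
        ring

lemma innerPi_mulVec_self_le_of_mul_self_eq (hπ : ∀ x, 0 ≤ π x)
    (hrev : ∀ x y, π x * Q x y = π y * Q y x) (hidem : Q * Q = Q) (f : Fin n → ℝ) :
    innerPi π (Q *ᵥ f) (Q *ᵥ f) ≤ innerPi π f f := by
  have hsymm : innerPi π (Q *ᵥ f) (Q *ᵥ f) = innerPi π f (Q *ᵥ f) := by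
    rw [← innerPi_mulVec_comm hrev f (Q *ᵥ f), mulVec_mulVec, hidem]
  have hcs := innerPi_sq_le hπ f (Q *ᵥ f)
  rw [← hsymm] at hcs
  nlinarith [innerPi_self_nonneg hπ f, innerPi_self_nonneg hπ (Q *ᵥ f)]

end InnerPi

section Rho

variable {n : ℕ} {π : Fin n → ℝ}

lemma rho_nonneg (hπ : ∀ x, 0 ≤ π x) (Q : Matrix (Fin n) (Fin n) ℝ) : 0 ≤ rho π Q :=
  Real.sSup_nonneg <| by
    rintro _ ⟨f, -, -, rfl⟩
    exact div_nonneg (abs_nonneg _) (innerPi_self_nonneg hπ f)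

lemma bddAbove_rayleighSet (hπ : ∀ x, 0 ≤ π x) {Q : Matrix (Fin n) (Fin n) ℝ}
    (hnonneg : ∀ x y, 0 ≤ Q x y) (hrow : ∀ x, ∑ y, Q x y = 1)
    (hrev : ∀ x y, π x * Q x y = π y * Q y x) : BddAbove (rayleighSet π Q) :=
  ⟨1, by
    rintro _ ⟨f, -, -, rfl⟩
    exact div_le_one_of_le₀ (abs_innerPi_mulVec_self_le hπ hnonneg hrow hrev f)
      (innerPi_self_nonneg hπ f)⟩

theorem rho_mul_mul_le (hπ : ∀ x, 0 < π x) {E P : Matrix (Fin n) (Fin n) ℝ}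
    (hErev : ∀ x y, π x * E x y = π y * E y x) (hErow : ∀ x, ∑ y, E x y = 1)
    (hEidem : E * E = E) (hP : BddAbove (rayleighSet π P)) :
    rho π (E * P * E) ≤ rho π P := by
  have hπ' : ∀ x, 0 ≤ π x := fun x => (hπ x).le
  refine Real.sSup_le ?_ (rho_nonneg hπ' P)
  rintro _ ⟨f, hf, hmean, rfl⟩
  set g := E *ᵥ f
  have hcompress : innerPi π f ((E * P * E) *ᵥ f) = innerPi π g (P *ᵥ g) := by
    rw [← mulVec_mulVec, ← mulVec_mulVec]
    exact innerPi_mulVec_comm hErev f _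
  have hgmean : ∑ x, π x * g x = 0 := (sum_mul_mulVec hErev hErow f).trans hmean
  have hgf : innerPi π g g ≤ innerPi π f f :=
    innerPi_mulVec_self_le_of_mul_self_eq hπ' hErev hEidem f
  rw [hcompress]
  rcases eq_or_ne g 0 with hg | hg
  · simpa [hg, innerPi] using rho_nonneg hπ' P
  · calc |innerPi π g (P *ᵥ g)| / innerPi π f f
          ≤ |innerPi π g (P *ᵥ g)| / innerPi π g g :=
          div_le_div_of_nonneg_left (abs_nonneg _) (innerPi_self_pos hπ hg) hgf
      _ ≤ rho π P := le_csSup hP ⟨g, hg, hgmean, rfl⟩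

end Rho

section Gibbs

variable {n k : ℕ} (π : Fin n → ℝ) (part : Fin n → Fin k)

lemma orbMass_pos (hπ : ∀ x, 0 < π x) (x : Fin n) : 0 < orbMass π part (part x) :=
  sum_pos (fun z _ => hπ z) ⟨x, by simp⟩

lemma gibbsKer_reversible (x y : Fin n) :
    π x * gibbsKer π part x y = π y * gibbsKer π part y x := by
  by_cases h : part y = part x
  · simp only [gibbsKer, of_apply]
    rw [if_pos h, if_pos h.symm, h]
    ring
  · simp only [gibbsKer, of_apply, if_neg h, if_neg (Ne.symm h), mul_zero]

lemma gibbsKer_rowSum (hπ : ∀ x, 0 < π x) (x : Fin n) : ∑ y, gibbsKer π part x y = 1 := by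
  simp only [gibbsKer, of_apply]
  rw [← sum_filter, ← sum_div]
  exact div_self (orbMass_pos π part hπ x).ne'

variable {π part}

lemma gibbsKer_apply_of_part_eq {x z : Fin n} (h : part z = part x) (y : Fin n) :
    gibbsKer π part z y = gibbsKer π part x y := by
  simp only [gibbsKer, of_apply, h]

lemma gibbsKer_apply_of_part_ne {x y : Fin n} (h : part y ≠ part x) :
    gibbsKer π part x y = 0 := by
  simp only [gibbsKer, of_apply, if_neg h]

lemma gibbsKer_mul_self (hπ : ∀ x, 0 < π x) :
    gibbsKer π part * gibbsKer π part = gibbsKer π part := by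
  ext x y
  rw [mul_apply]
  calc ∑ z, gibbsKer π part x z * gibbsKer π part z y
      = ∑ z, gibbsKer π part x z * gibbsKer π part x y := sum_congr rfl fun z _ => by
        by_cases h : part z = part x
        · rw [gibbsKer_apply_of_part_eq h]
        · rw [gibbsKer_apply_of_part_ne h, zero_mul, zero_mul]
    _ = gibbsKer π part x y := by rw [← sum_mul, gibbsKer_rowSum π part hπ, one_mul]

end Gibbs

theorem stmt4_general {n k : ℕ}
    (π : Fin n → ℝ) (hπpos : ∀ x, 0 < π x)
    (part : Fin n → Fin k)
    (P : Matrix (Fin n) (Fin n) ℝ)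
    (hPnonneg : ∀ x y, 0 ≤ P x y) (hProw : ∀ x, ∑ y, P x y = 1)
    (hPrev : ∀ x y, π x * P x y = π y * P y x) :
    rho π (gibbsKer π part * P * gibbsKer π part) ≤ rho π P :=
  rho_mul_mul_le hπpos (gibbsKer_reversible π part) (gibbsKer_rowSum π part hπpos)
    (gibbsKer_mul_self hπpos)
    (bddAbove_rayleighSet (fun x => (hπpos x).le) hPnonneg hProw hPrev)

/-- `ρ(GPG) ≤ ρ(P)` for any `π`-reversible stochastic `P`. -/
theorem stmt4 {n k : ℕ} (hn : 0 < n)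
    (π : Fin n → ℝ) (hπpos : ∀ x, 0 < π x) (hπsum : ∑ x, π x = 1)
    (part : Fin n → Fin k) (hpart : Function.Surjective part)
    (P : Matrix (Fin n) (Fin n) ℝ)
    (hPnonneg : ∀ x y, 0 ≤ P x y) (hProw : ∀ x, ∑ y, P x y = 1)
    (hPrev : ∀ x y, π x * P x y = π y * P y x) :
    rho π (gibbsKer π part * P * gibbsKer π part) ≤ rho π P :=
  stmt4_general π hπpos part P hPnonneg hProw hPrev
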